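/- Let E₁, …, E_{n+1} be exchangeable real random variables, α ∈ (0,1), and let Q = Quantile({E₁,…,E_n}, (1−α)(1 + 1/n)) be the ⌈(1−α)(n+1)⌉-th smallest of E₁, …, E_n (or +∞ if the index exceeds n). Then P(E_{n+1} ≤ Q) ≥ 1 − α. -/

import Mathlib

open MeasureTheory Set
open scoped ENNReal NNReal

/-- The k-th smallest value of a tuple of reals (as an extended real),
taken to be +∞ if k exceeds the length (or k = 0). -/
noncomputable def kthSmallest {n : ℕ} (v : Fin n → ℝ) (k : ℕ) : EReal :=
  if h : 0 < k ∧ k ≤ n then ((v (Tuple.sort v ⟨k - 1, by omega⟩)) : EReal) else ⊤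

/-- number of entries strictly below `x` -/
noncomputable def cnt {m : ℕ} (w : Fin m → ℝ) (x : ℝ) : ℕ :=
  (Finset.univ.filter fun i => w i < x).card

lemma cnt_mono {m : ℕ} (w : Fin m → ℝ) {x y : ℝ} (h : x ≤ y) : cnt w x ≤ cnt w y := by
  apply Finset.card_le_card
  intro i hi
  simp only [Finset.mem_filter, Finset.mem_univ, true_and] at *
  exact lt_of_lt_of_le hi h

lemma cnt_sort_le {m : ℕ} (w : Fin m → ℝ) (p : Fin m) :
    cnt w (w (Tuple.sort w p)) ≤ p.val := by
  classical
  have hmono := Tuple.monotone_sort w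
  have hsub : (Finset.univ.filter fun i => w i < w (Tuple.sort w p)) ⊆
      Finset.image (Tuple.sort w) (Finset.Iio p) := by
    intro i hi
    simp only [Finset.mem_filter] at hi
    refine Finset.mem_image.mpr ⟨(Tuple.sort w).symm i, ?_, by simp⟩
    rw [Finset.mem_Iio]
    by_contra hle
    push_neg at hle
    have := hmono hle
    simp only [Function.comp_apply, Equiv.apply_symm_apply] at this
    exact absurd hi.2 (not_lt.mpr this)
  calc cnt w (w (Tuple.sort w p)) ≤ (Finset.image (Tuple.sort w) (Finset.Iio p)).card :=
        Finset.card_le_card hsub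
    _ = (Finset.Iio p).card := Finset.card_image_of_injective _ (Tuple.sort w).injective
    _ = p.val := by rw [Fin.card_Iio]

lemma le_kthSmallest_iff {m k : ℕ} (w : Fin m → ℝ) (x : ℝ) (hk : 0 < k) (hkm : k ≤ m) :
    (x : EReal) ≤ kthSmallest w k ↔ cnt w x < k := by
  classical
  rw [kthSmallest, dif_pos ⟨hk, hkm⟩, EReal.coe_le_coe_iff]
  set p : Fin m := ⟨k - 1, by omega⟩ with hp
  have hpval : p.val = k - 1 := rfl
  constructor
  · intro h
    have h1 : cnt w x ≤ cnt w (w (Tuple.sort w p)) := cnt_mono w h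
    have h2 := cnt_sort_le w p
    omega
  · intro h
    by_contra hx
    push_neg at hx
    have hsub : Finset.image (Tuple.sort w) (Finset.Iic p) ⊆
        Finset.univ.filter fun i => w i < x := by
      intro i hi
      obtain ⟨q, hq, rfl⟩ := Finset.mem_image.mp hi
      rw [Finset.mem_Iic] at hq
      have := Tuple.monotone_sort w hq
      simp only [Function.comp_apply] at this
      simp only [Finset.mem_filter, Finset.mem_univ, true_and]
      exact lt_of_le_of_lt this hx
    have := Finset.card_le_card hsub
    rw [Finset.card_image_of_injective _ (Tuple.sort w).injective, Fin.card_Iic, hpval] at this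
    unfold cnt at h
    omega

lemma le_card_rank {m k : ℕ} (w : Fin m → ℝ) (hk : 0 < k) (hkm : k ≤ m) :
    k ≤ (Finset.univ.filter fun j => cnt w (w j) < k).card := by
  classical
  set p : Fin m := ⟨k - 1, by omega⟩ with hp
  have hpval : p.val = k - 1 := rfl
  have hsub : Finset.image (Tuple.sort w) (Finset.Iic p) ⊆
      Finset.univ.filter fun j => cnt w (w j) < k := by
    intro j hj
    obtain ⟨q, hq, rfl⟩ := Finset.mem_image.mp hj
    rw [Finset.mem_Iic] at hq
    have h1 := cnt_sort_le w q
    have h2 : q.val ≤ p.val := hq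
    rw [hpval] at h2
    simp only [Finset.mem_filter, Finset.mem_univ, true_and]
    omega
  have := Finset.card_le_card hsub
  rw [Finset.card_image_of_injective _ (Tuple.sort w).injective, Fin.card_Iic, hpval] at this
  omega

lemma card_filter_perm {m : ℕ} (π : Equiv.Perm (Fin m)) (p : Fin m → Prop) [DecidablePred p] :
    (Finset.univ.filter fun i => p (π i)).card = (Finset.univ.filter p).card := by
  rw [← Finset.card_image_of_injective (Finset.univ.filter fun i => p (π i)) π.injective]
  congr 1
  ext j
  simp only [Finset.mem_image, Finset.mem_filter, Finset.mem_univ, true_and]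
  constructor
  · rintro ⟨i, hi, rfl⟩; exact hi
  · intro hj; exact ⟨π.symm j, by simpa using hj, by simp⟩

lemma cnt_castSucc {n : ℕ} (v : Fin (n + 1) → ℝ) (x : ℝ) (hx : ¬ v (Fin.last n) < x) :
    cnt v x = cnt (fun i : Fin n => v i.castSucc) x := by
  classical
  unfold cnt
  rw [Finset.card_filter, Finset.card_filter, Fin.sum_univ_castSucc]
  simp [hx]

/-- Conformal quantile lemma: if E₁,…,E_{n+1} are exchangeable real random variables
and Q is the ⌈(1−α)(n+1)⌉-th smallest of E₁,…,E_n (+∞ if the index exceeds n),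
then P(E_{n+1} ≤ Q) ≥ 1 − α. -/
theorem conformal_quantile_lemma
    {Ω : Type*} [MeasurableSpace Ω] (P : Measure Ω) [IsProbabilityMeasure P]
    (n : ℕ) (E : Fin (n + 1) → Ω → ℝ) (hE : ∀ i, Measurable (E i))
    (hexch : ∀ π : Equiv.Perm (Fin (n + 1)),
      P.map (fun ω i => E (π i) ω) = P.map (fun ω i => E i ω))
    (α : ℝ) (hα : α ∈ Ioo (0 : ℝ) 1) :
    ENNReal.ofReal (1 - α) ≤
      P {ω | (E (Fin.last n) ω : EReal) ≤
        kthSmallest (fun i : Fin n => E i.castSucc ω) ⌈(1 - α) * (n + 1 : ℝ)⌉₊} := by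
  classical
  obtain ⟨hα0, hα1⟩ := hα
  set k := ⌈(1 - α) * (n + 1 : ℝ)⌉₊ with hkdef
  have hone : ENNReal.ofReal (1 - α) ≤ 1 := ENNReal.ofReal_le_one.mpr (by linarith)
  have hk1 : 0 < k := Nat.ceil_pos.mpr (by nlinarith)
  have hkle : (1 - α) * (n + 1 : ℝ) ≤ k := Nat.le_ceil _
  by_cases hkn : k ≤ n
  swap
  · have hset : {ω | (E (Fin.last n) ω : EReal) ≤
        kthSmallest (fun i : Fin n => E i.castSucc ω) k} = Set.univ := by
      ext ω
      simp only [Set.mem_setOf_eq, Set.mem_univ, iff_true]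
      rw [kthSmallest, dif_neg (by omega)]
      exact le_top
    rw [hset, measure_univ]
    exact hone
  -- main case
  set B : Fin (n + 1) → Set Ω := fun j => {ω | cnt (fun i => E i ω) (E j ω) < k} with hB
  have hNmeas : ∀ j : Fin (n + 1), Measurable (fun ω => cnt (fun i => E i ω) (E j ω)) := by
    intro j
    have : (fun ω => cnt (fun i => E i ω) (E j ω)) =
        fun ω => ∑ i : Fin (n + 1), if E i ω < E j ω then 1 else 0 := by
      funext ω; exact Finset.card_filter _ _
    rw [this]
    exact Finset.measurable_sum _ fun i _ =>
      Measurable.ite (measurableSet_lt (hE i) (hE j)) measurable_const measurable_const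
  have hBmeas : ∀ j, MeasurableSet (B j) := by
    intro j
    have : B j = (fun ω => cnt (fun i => E i ω) (E j ω)) ⁻¹' (Set.Iio k) := rfl
    rw [this]
    exact (hNmeas j) ((Set.to_countable _).measurableSet)
  -- exchangeability: all B j have the same measure
  have hF : Measurable (fun ω (i : Fin (n + 1)) => E i ω) :=
    measurable_pi_lambda _ hE
  have hSmeas : MeasurableSet {v : Fin (n + 1) → ℝ | cnt v (v (Fin.last n)) < k} := by
    have heq : {v : Fin (n + 1) → ℝ | cnt v (v (Fin.last n)) < k} =
        (fun v : Fin (n + 1) → ℝ => cnt v (v (Fin.last n))) ⁻¹' (Set.Iio k) := rfl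
    have hm : Measurable (fun v : Fin (n + 1) → ℝ => cnt v (v (Fin.last n))) := by
      have : (fun v : Fin (n + 1) → ℝ => cnt v (v (Fin.last n))) =
          fun v => ∑ i : Fin (n + 1), if v i < v (Fin.last n) then 1 else 0 := by
        funext v; exact Finset.card_filter _ _
      rw [this]
      exact Finset.measurable_sum _ fun i _ =>
        Measurable.ite (measurableSet_lt (measurable_pi_apply i) (measurable_pi_apply _))
          measurable_const measurable_const
    rw [heq]
    exact hm ((Set.to_countable _).measurableSet)
  have hPB : ∀ j, P (B j) = P (B (Fin.last n)) := by
    intro j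
    set π : Equiv.Perm (Fin (n + 1)) := Equiv.swap j (Fin.last n) with hπ
    have hFπ : Measurable (fun ω (i : Fin (n + 1)) => E (π i) ω) :=
      measurable_pi_lambda _ fun i => hE (π i)
    have hmap := congrArg (fun μ : Measure (Fin (n + 1) → ℝ) =>
      μ {v | cnt v (v (Fin.last n)) < k}) (hexch π)
    rw [Measure.map_apply hFπ hSmeas, Measure.map_apply hF hSmeas] at hmap
    have h1 : (fun ω (i : Fin (n + 1)) => E (π i) ω) ⁻¹'
        {v | cnt v (v (Fin.last n)) < k} = B j := by
      ext ω
      simp only [Set.mem_preimage, Set.mem_setOf_eq, hB]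
      have hπlast : π (Fin.last n) = j := Equiv.swap_apply_right _ _
      rw [hπlast]
      unfold cnt
      rw [card_filter_perm π (fun i => E i ω < E j ω)]
    have h2 : (fun ω (i : Fin (n + 1)) => E i ω) ⁻¹'
        {v | cnt v (v (Fin.last n)) < k} = B (Fin.last n) := rfl
    rw [h1, h2] at hmap
    exact hmap
  -- counting bound
  have hsum : (k : ℝ≥0∞) ≤ ∑ j : Fin (n + 1), P (B j) := by
    have hptwise : ∀ ω, (k : ℝ≥0∞) ≤ ∑ j : Fin (n + 1), (B j).indicator (1 : Ω → ℝ≥0∞) ω := by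
      intro ω
      have hrank := le_card_rank (fun i => E i ω) hk1 (by omega)
      have : ∑ j : Fin (n + 1), (B j).indicator (1 : Ω → ℝ≥0∞) ω =
          ((Finset.univ.filter fun j : Fin (n + 1) =>
            cnt (fun i => E i ω) (E j ω) < k).card : ℝ≥0∞) := by
        rw [Finset.card_filter]
        push_cast
        apply Finset.sum_congr rfl
        intro j _
        by_cases hj : cnt (fun i => E i ω) (E j ω) < k
        · have hm : ω ∈ B j := hj
          rw [if_pos hj, Set.indicator_of_mem hm]; simp
        · have hm : ω ∉ B j := hj
          rw [if_neg hj, Set.indicator_of_notMem hm]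
      rw [this]
      exact_mod_cast Nat.cast_le.mpr hrank
    calc (k : ℝ≥0∞) = ∫⁻ (_ : Ω), (k : ℝ≥0∞) ∂P := by simp
      _ ≤ ∫⁻ ω, ∑ j : Fin (n + 1), (B j).indicator (1 : Ω → ℝ≥0∞) ω ∂P :=
          lintegral_mono hptwise
      _ = ∑ j : Fin (n + 1), ∫⁻ ω, (B j).indicator (1 : Ω → ℝ≥0∞) ω ∂P :=
          lintegral_finset_sum _ fun j _ =>
            ((measurable_const).indicator (hBmeas j))
      _ = ∑ j : Fin (n + 1), P (B j) := by
          apply Finset.sum_congr rfl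
          intro j _
          exact lintegral_indicator_one (hBmeas j)
  have hsum2 : ∑ j : Fin (n + 1), P (B j) = (n + 1 : ℝ≥0∞) * P (B (Fin.last n)) := by
    rw [Finset.sum_congr rfl fun j _ => hPB j, Finset.sum_const, Finset.card_univ,
      Fintype.card_fin]
    simp [mul_comm]
  have hkP : (k : ℝ≥0∞) ≤ (n + 1 : ℝ≥0∞) * P (B (Fin.last n)) := hsum2 ▸ hsum
  -- conclude
  have hfinal : ENNReal.ofReal (1 - α) ≤ P (B (Fin.last n)) := by
    have hc0 : ((n : ℝ≥0∞) + 1) ≠ 0 := by simp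
    have hct : ((n : ℝ≥0∞) + 1) ≠ ⊤ := by simp
    rw [← ENNReal.mul_le_mul_iff_left hc0 hct]
    calc ENNReal.ofReal (1 - α) * ((n : ℝ≥0∞) + 1)
        = ENNReal.ofReal (1 - α) * ENNReal.ofReal ((n : ℝ) + 1) := by
          rw [ENNReal.ofReal_add (by positivity) zero_le_one]
          simp [ENNReal.ofReal_natCast]
      _ = ENNReal.ofReal ((1 - α) * ((n : ℝ) + 1)) :=
          (ENNReal.ofReal_mul (by linarith)).symm
      _ ≤ ENNReal.ofReal (k : ℝ) := ENNReal.ofReal_le_ofReal (by exact_mod_cast hkle)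
      _ = (k : ℝ≥0∞) := ENNReal.ofReal_natCast k
      _ ≤ (n + 1 : ℝ≥0∞) * P (B (Fin.last n)) := hkP
      _ = P (B (Fin.last n)) * ((n : ℝ≥0∞) + 1) := by ring
  -- identify the event
  have hevent : {ω | (E (Fin.last n) ω : EReal) ≤
      kthSmallest (fun i : Fin n => E i.castSucc ω) k} = B (Fin.last n) := by
    ext ω
    simp only [Set.mem_setOf_eq, hB]
    rw [le_kthSmallest_iff _ _ hk1 hkn]
    rw [cnt_castSucc (fun i => E i ω) (E (Fin.last n) ω) (lt_irrefl _)]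
  rw [hevent]
  exact hfinal
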